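/- Let J = diag(1, 0, 0; 0, 0, 1; 0, 1, 0) be the 3×3 Hermitian matrix [[1,0,0],[0,0,1],[0,1,0]] and A = [[α,0,0],[0,0,β],[0,β,1]] with α, β ∈ ℝ. Let B be the 6×6 Hermitian matrix of the bihomogeneous form ⟨Az,z⟩⟨Jz,z⟩ with respect to the degree-2 Veronese monomials (z₀², z₀z₁, z₀z₂, z₁², z₁z₂, z₂²). Then B never has exactly one negative eigenvalue together with rank ≥ 2: in fact, if (α,β) ≠ (0,0) then B has at least two negative eigenvalues. -/

import Mathlib

noncomputable def Bmat18 (α β : ℝ) : Matrix (Fin 6) (Fin 6) ℝ :=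
  !![α, 0, 0, 0, 0, 0;
     0, 0, α + β, 0, 0, 0;
     0, α + β, 1, 0, 0, 0;
     0, 0, 0, 0, 0, β;
     0, 0, 0, 0, 2 * β, 1;
     0, 0, 0, β, 1, 0]

/-!
If a real symmetric matrix `B` is negative definite on a subspace `W`, then a vector of `W` is
determined by its coordinates along the eigenvectors with negative eigenvalues: if these all
vanish, the form `x ↦ xᵀ B x` is a nonnegative combination of squares. Hence `dim W` is at most
the number of negative eigenvalues. For `Bmat18 α β` such a plane is spanned by two
`B`-orthogonal vectors of negative `B`-norm, one from the block of coordinates `3, 4, 5` and,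
when `β ≥ 0`, one from the block `0, 1, 2`.
-/

open Matrix

namespace Matrix.IsHermitian

variable {n : Type*} [Fintype n] [DecidableEq n] {B : Matrix n n ℝ} (hB : B.IsHermitian)

lemma dotProduct_mulVec_self_eq_sum_eigenvalues (x : n → ℝ) :
    x ⬝ᵥ B *ᵥ x =
      ∑ i, hB.eigenvalues i * (star (hB.eigenvectorUnitary : Matrix n n ℝ) *ᵥ x) i ^ 2 := by
  have hxU : x ᵥ* (hB.eigenvectorUnitary : Matrix n n ℝ) =
      star (hB.eigenvectorUnitary : Matrix n n ℝ) *ᵥ x := by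
    rw [star_eq_conjTranspose, conjTranspose_eq_transpose_of_trivial, mulVec_transpose]
  conv_lhs => rw [hB.spectral_theorem]
  rw [Unitary.conjStarAlgAut_apply, ← mulVec_mulVec, ← mulVec_mulVec, dotProduct_mulVec, hxU]
  simp [mulVec_diagonal, dotProduct, sq, mul_left_comm]

lemma finrank_le_card_neg_eigenvalues (W : Submodule ℝ (n → ℝ))
    (hW : ∀ x ∈ W, x ≠ 0 → x ⬝ᵥ B *ᵥ x < 0) :
    Module.finrank ℝ W ≤ Fintype.card {i // hB.eigenvalues i < 0} := by
  let f : W →ₗ[ℝ] {i // hB.eigenvalues i < 0} → ℝ :=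
    LinearMap.pi (fun i => (LinearMap.proj i.1).comp
      ((mulVecLin (star (hB.eigenvectorUnitary : Matrix n n ℝ))).comp W.subtype))
  have hf : Function.Injective f := by
    rw [← LinearMap.ker_eq_bot, Submodule.eq_bot_iff]
    intro x hx
    by_contra hx0
    have hneg := hW x x.2 (by simpa using hx0)
    rw [hB.dotProduct_mulVec_self_eq_sum_eigenvalues] at hneg
    refine hneg.not_ge (Finset.sum_nonneg fun i _ => ?_)
    rcases lt_or_ge (hB.eigenvalues i) 0 with hi | hi
    · have hxi : (star (hB.eigenvectorUnitary : Matrix n n ℝ) *ᵥ x) i = 0 :=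
        congrFun hx ⟨i, hi⟩
      simp [hxi]
    · positivity
  simpa using LinearMap.finrank_le_finrank_of_injective hf

lemma two_le_card_neg_eigenvalues_of_orthogonal (u w : n → ℝ) (huw : u ⬝ᵥ B *ᵥ w = 0)
    (hu : u ⬝ᵥ B *ᵥ u < 0) (hw : w ⬝ᵥ B *ᵥ w < 0) :
    2 ≤ Fintype.card {i // hB.eigenvalues i < 0} := by
  have hwu : w ⬝ᵥ B *ᵥ u = 0 := by
    rw [dotProduct_mulVec, ← mulVec_transpose, ← conjTranspose_eq_transpose_of_trivial, hB.eq,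
      dotProduct_comm, huw]
  have hq (a b : ℝ) : (a • u + b • w) ⬝ᵥ B *ᵥ (a • u + b • w) =
      a ^ 2 * (u ⬝ᵥ B *ᵥ u) + b ^ 2 * (w ⬝ᵥ B *ᵥ w) := by
    simp only [mulVec_add, mulVec_smul, add_dotProduct, dotProduct_add, smul_dotProduct,
      dotProduct_smul, huw, hwu, smul_eq_mul]
    ring
  have hneg {a b : ℝ} (hab : a • u + b • w ≠ 0) :
      (a • u + b • w) ⬝ᵥ B *ᵥ (a • u + b • w) < 0 := by
    rw [hq]
    rcases eq_or_ne a 0 with rfl | ha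
    · rcases eq_or_ne b 0 with rfl | hb
      · simp at hab
      · nlinarith [sq_pos_of_ne_zero hb]
    · nlinarith [sq_pos_of_ne_zero ha, sq_nonneg b]
  have hli : LinearIndependent ℝ ![u, w] := by
    refine LinearIndependent.pair_iff.2 fun a b hab => ?_
    have h0 : a ^ 2 * (u ⬝ᵥ B *ᵥ u) + b ^ 2 * (w ⬝ᵥ B *ᵥ w) = 0 := by
      rw [← hq, hab, zero_dotProduct]
    have ha : a ^ 2 = 0 := by nlinarith [sq_nonneg a, sq_nonneg b]
    have hb : b ^ 2 = 0 := by nlinarith [sq_nonneg a, sq_nonneg b]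
    exact ⟨pow_eq_zero_iff two_ne_zero |>.1 ha, pow_eq_zero_iff two_ne_zero |>.1 hb⟩
  calc 2 = Module.finrank ℝ (Submodule.span ℝ (Set.range ![u, w])) := by
        rw [finrank_span_eq_card hli, Fintype.card_fin]
    _ ≤ _ := hB.finrank_le_card_neg_eigenvalues _ fun x hx hx0 => by
        obtain ⟨c, rfl⟩ := (Submodule.mem_span_range_iff_exists_fun ℝ).1 hx
        simp only [Fin.sum_univ_two, cons_val_zero, cons_val_one] at hx0 ⊢
        exact hneg hx0

end Matrix.IsHermitian

lemma dotProduct_Bmat18_mulVec (α β : ℝ) (x y : Fin 6 → ℝ) :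
    x ⬝ᵥ Bmat18 α β *ᵥ y = α * x 0 * y 0 + (α + β) * (x 1 * y 2 + x 2 * y 1) + x 2 * y 2
      + β * (x 3 * y 5 + x 5 * y 3) + 2 * β * x 4 * y 4 + x 4 * y 5 + x 5 * y 4 := by
  simp only [Bmat18, dotProduct, mulVec, of_apply, cons_val', cons_val_fin_one, Fin.sum_univ_six,
    cons_val_zero, cons_val_one, cons_val]
  ring

theorem stmt_18 (α β : ℝ) (hαβ : (α, β) ≠ (0, 0))
    (hB : (Bmat18 α β).IsHermitian) :
    2 ≤ Fintype.card {i // hB.eigenvalues i < 0} := by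
  rcases lt_or_ge β 0 with hβ | hβ
  · refine hB.two_le_card_neg_eigenvalues_of_orthogonal ![0, 0, 0, 0, 1, 0]
      ![0, 0, 0, 1, -β, 2 * β ^ 2] ?_ ?_ ?_ <;>
      simp only [dotProduct_Bmat18_mulVec, cons_val_zero, cons_val_one, cons_val]
    · ring
    · linarith
    · nlinarith [pow_pos (neg_pos.2 hβ) 3]
  have hu : ![0, 0, 0, 2, 1, -2] ⬝ᵥ Bmat18 α β *ᵥ ![0, 0, 0, 2, 1, -2] < 0 := by
    simp only [dotProduct_Bmat18_mulVec, cons_val_zero, cons_val_one, cons_val]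
    linarith
  rcases eq_or_ne (α + β) 0 with hαβ0 | hαβ0
  · have hα : α < 0 := by
      refine lt_of_le_of_ne (by linarith) fun hα => hαβ ?_
      simp [hα, show β = 0 by linarith]
    refine hB.two_le_card_neg_eigenvalues_of_orthogonal _ ![1, 0, 0, 0, 0, 0] ?_ hu ?_ <;>
      simp only [dotProduct_Bmat18_mulVec, cons_val_zero, cons_val_one, cons_val]
    · ring
    · linarith
  · refine hB.two_le_card_neg_eigenvalues_of_orthogonal _ ![0, -1, α + β, 0, 0, 0] ?_ hu ?_ <;>
      simp only [dotProduct_Bmat18_mulVec, cons_val_zero, cons_val_one, cons_val]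
    · ring
    · nlinarith [sq_pos_of_ne_zero hαβ0]
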